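/- arXiv:0904.3777 — 3 statements merged into one kernel-verified Lean document; each statement's English description precedes it below -/
import Mathlib

section
/- For every positive integer D congruent to 0 or 3 modulo 4, the class number H_4^*(4D) of Γ_0^*(4)-classes of forms in Q_{4D,4} equals three times the Hurwitz class number H(D); that is, H_4^*(4D) = 3·H(D). -/
/-!
Statement 0: For every positive integer `D ≡ 0, 3 (mod 4)`, the class number
`H₄^*(4D)` of `Γ₀^*(4)`-classes of forms in `Q_{4D,4}` equals `3 · H(D)`,
where `H(D)` is the Hurwitz class number.
-/

/-- A binary quadratic form `(a, b, c)`, representing `a x² + b x y + c y²`. -/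
abbrev QF := ℤ × ℤ × ℤ

/-- The discriminant `b² - 4 a c` of a binary quadratic form. -/
def disc (Q : QF) : ℤ := Q.2.1 ^ 2 - 4 * Q.1 * Q.2.2

/-- The (right) action of an integer matrix `g = (p q; r s)` on a form:
`(Q ∘ g)(x, y) = Q (p x + q y, r x + s y)`. -/
def act (Q : QF) (g : Matrix (Fin 2) (Fin 2) ℤ) : QF :=
  (Q.1 * g 0 0 ^ 2 + Q.2.1 * g 0 0 * g 1 0 + Q.2.2 * g 1 0 ^ 2,
   2 * Q.1 * g 0 0 * g 0 1 + Q.2.1 * (g 0 0 * g 1 1 + g 0 1 * g 1 0) + 2 * Q.2.2 * g 1 0 * g 1 1,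
   Q.1 * g 0 1 ^ 2 + Q.2.1 * g 0 1 * g 1 1 + Q.2.2 * g 1 1 ^ 2)

/-- Integer matrices of determinant `1` with lower-left entry divisible by `N`. -/
def Gamma0 (N : ℕ) : Set (Matrix (Fin 2) (Fin 2) ℤ) :=
  {g | g.det = 1 ∧ (N : ℤ) ∣ g 1 0}

/-- `Q_{D,N}`: positive definite forms `[N a, b, c]` of discriminant `-D`. -/
def QDN (N : ℕ) (D : ℤ) : Set QF :=
  {Q | 0 < Q.1 ∧ (N : ℤ) ∣ Q.1 ∧ disc Q = -D}

/-- The action of the Fricke involution `W₄` on forms: `[4a, b, c] ↦ [4c, -b, a]`. -/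
def fricke4 (Q : QF) : QF := (4 * Q.2.2, -Q.2.1, Q.1 / 4)

/-- `Γ₀(N)`-equivalence of forms. -/
def req (N : ℕ) (Q Q' : QF) : Prop := ∃ g ∈ Gamma0 N, act Q g = Q'

/-- `Γ₀^*(4)`-equivalence of forms, where `Γ₀^*(4)` is generated by `Γ₀(4)`
and the Fricke involution `W₄`. -/
def reqStar4 (Q Q' : QF) : Prop :=
  ∃ g ∈ Gamma0 4, act Q g = Q' ∨ fricke4 (act Q g) = Q'

/-- Twice the order of the stabilizer of `Q` in `Γ₀(N) ⊂ PSL₂(ℤ)`: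
the number of determinant-one integer matrices in `Γ₀(N)` fixing `Q`
(the matrices `g` and `-g` act identically). -/
noncomputable def stabCard (N : ℕ) (Q : QF) : ℕ :=
  Nat.card {g : Matrix (Fin 2) (Fin 2) ℤ // g ∈ Gamma0 N ∧ act Q g = Q}

/-- Twice the order of the stabilizer of `Q` in `Γ₀^*(4)` (mod `±1`): elements of
`Γ₀^*(4)` are represented, up to sign, either by a matrix of `Γ₀(4)` or by such
a matrix followed by the Fricke involution. -/
noncomputable def stabStarCard4 (Q : QF) : ℕ :=
  Nat.card {g : Matrix (Fin 2) (Fin 2) ℤ // g ∈ Gamma0 4 ∧ act Q g = Q} +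
    Nat.card {g : Matrix (Fin 2) (Fin 2) ℤ // g ∈ Gamma0 4 ∧ fricke4 (act Q g) = Q}

/-- `R` is a complete (finite) set of representatives for the elements of `S`
modulo the relation `r`. -/
def IsReps (S : Set QF) (r : QF → QF → Prop) (R : Finset QF) : Prop :=
  ↑R ⊆ S ∧ ∀ Q ∈ S, ∃! Q', Q' ∈ R ∧ r Q Q'

/-!
A form of `Q_{4D,4}` is `[4a, 2b, c] = q(2x, y)` with `q = [a, b, c] ∈ Q_{D,1}`, and conjugation by
`diag(2, 1)` carries `Γ₀(4)` onto `Γ(2)` and the Fricke involution to `2S`. So `Γ₀^*(4)`-classes in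
`Q_{4D,4}` are the classes in `Q_{D,1}` under the theta group `Γ_θ = {g ≡ 1 or S mod 2}`, which has
index 3 in `SL₂(ℤ)`. The relation is then the mass formula
`∑_{H-classes} 1/|Stab_H| = [G : H] · ∑_{G-classes} 1/|Stab_G|` for a subgroup `H` of finite index
acting on a set with finite stabilizers: within one `G`-orbit, the `H`-classes correspond to the
orbits of `Stab_G(x)` on `H \ G`, and `|Stab_G(x)| / |Stab_H|` is the length of such an orbit.
-/

open Finset MulAction
open scoped MatrixGroups

theorem Finset.sum_eq_sum_sum_filter_of_existsUnique {α β M : Type*} [AddCommMonoid M]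
    {s : Finset α} {t : Finset β} {r : α → β → Prop} [∀ a b, Decidable (r a b)]
    (h : ∀ a ∈ s, ∃! b, b ∈ t ∧ r a b) (f : α → M) :
    ∑ a ∈ s, f a = ∑ b ∈ t, ∑ a ∈ s with r a b, f a := by
  rw [sum_comm' (t' := s) (s' := fun a => t.filter (r a)) (by simp; tauto)]
  refine sum_congr rfl fun a ha => ?_
  obtain ⟨b, hb, hbu⟩ := h a ha
  rw [show t.filter (r a) = {b} by
    ext b'; simpa using ⟨hbu b', fun h => h ▸ hb⟩, sum_singleton]

namespace MulAction

variable {G X : Type*} [Group G] [MulAction G X] {H : Subgroup G}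

theorem card_stabilizer_subgroup (x : X) :
    Nat.card (stabilizer H x) = Nat.card {g : G // g ∈ H ∧ g • x = x} :=
  Nat.card_congr (Equiv.subtypeSubtypeEquivSubtypeInter (· ∈ H) (fun g : G => g • x = x))

theorem card_eq_sum_card_mul_inv_mem {ι K : Type*} [Fintype ι] [Finite K] {c : ι → G}
    (hc : ∀ g : G, ∃! i, g * (c i)⁻¹ ∈ H) (f : K → G) :
    Nat.card K = ∑ i, Nat.card {k : K // f k * (c i)⁻¹ ∈ H} := by
  choose idx hidx hidxu using fun k => hc (f k)
  rw [← Nat.card_congr (Equiv.sigmaFiberEquiv idx), Nat.card_sigma]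
  exact sum_congr rfl fun i _ => Nat.card_congr <| Equiv.subtypeEquivRight fun k =>
    ⟨fun hk => hk ▸ hidx k, fun hk => (hidxu k i hk).symm⟩

variable {x : X} {a b : G}

theorem card_stabilizer_mul_inv_mem_of_mem (hab : a • x ∈ orbit H (b • x)) :
    Nat.card {k : stabilizer G x // a * k * b⁻¹ ∈ H} = Nat.card (stabilizer H (a • x)) := by
  obtain ⟨h₀, hh₀⟩ := hab
  have hb : (h₀ : G)⁻¹ • a • x = b • x := by
    rw [inv_smul_eq_iff, ← hh₀]; rfl
  rw [card_stabilizer_subgroup]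
  refine Nat.card_congr ((Equiv.subtypeSubtypeEquivSubtypeInter (· ∈ stabilizer G x)
    (fun k => a * k * b⁻¹ ∈ H)).trans (Equiv.subtypeEquiv
      ((Equiv.mulLeft a).trans (Equiv.mulRight (b⁻¹ * (h₀ : G)⁻¹))) fun k => ?_))
  have hfix : (a * k * (b⁻¹ * (h₀ : G)⁻¹)) • a • x = a • k • x := by
    rw [← smul_smul, ← smul_smul, ← smul_smul, hb, inv_smul_smul]
  simp only [Equiv.trans_apply, Equiv.coe_mulLeft, Equiv.coe_mulRight, mem_stabilizer_iff,
    hfix, smul_left_cancel_iff]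
  constructor
  · rintro ⟨hk, hkH⟩
    exact ⟨by simpa [mul_assoc] using H.mul_mem hkH (H.inv_mem h₀.2), hk⟩
  · rintro ⟨hkH, hk⟩
    exact ⟨hk, by simpa [mul_assoc] using H.mul_mem hkH h₀.2⟩

theorem card_stabilizer_mul_inv_mem_of_notMem (hab : a • x ∉ orbit H (b • x)) :
    Nat.card {k : stabilizer G x // a * k * b⁻¹ ∈ H} = 0 := by
  refine @Nat.card_of_isEmpty _ ⟨fun ⟨k, hk⟩ => hab ⟨⟨_, hk⟩, ?_⟩⟩
  change (a * k * b⁻¹) • b • x = a • x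
  rw [smul_smul, inv_mul_cancel_right, ← smul_smul, mem_stabilizer_iff.mp k.2]

variable {ι : Type*} [Fintype ι] {c : ι → G}

/-- Sorting `k ∈ Stab_G(x)` by the coset `H c_i` containing `c_j k` gives parts that are empty
unless `e i = e j`, and are otherwise in bijection with `Stab_H(e j)`. -/
theorem card_filter_mul_card_stabilizer_subgroup [DecidableEq X]
    (hc : ∀ g : G, ∃! i, g * (c i)⁻¹ ∈ H)
    [Finite (stabilizer G x)] {e : ι → X} (he : ∀ i, e i ∈ orbit H (c i • x))
    (he_inj : ∀ i j, e i ∈ orbit H (e j) → e i = e j) (j : ι) :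
    #{i | e i = e j} * Nat.card (stabilizer H (e j)) = Nat.card (stabilizer G x) := by
  have hO : ∀ i, orbit H (e i) = orbit H (c i • x) := fun i => orbit_eq_iff.mpr (he i)
  have he_iff : ∀ i, e i = e j ↔ c j • x ∈ orbit H (c i • x) := fun i => by
    rw [← orbit_eq_iff, ← hO, ← hO]
    exact ⟨fun h => h ▸ rfl, fun h => he_inj i j (h ▸ mem_orbit_self _)⟩
  have hstab : Nat.card (stabilizer H (c j • x)) = Nat.card (stabilizer H (e j)) :=
    Nat.card_congr (stabilizerEquivStabilizerOfOrbitRel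
      (orbitRel_apply.mpr (orbit_eq_iff.mp (hO j).symm))).toEquiv
  have h_mem : ∀ i ∈ ({i | e i = e j} : Finset ι),
      Nat.card {k : stabilizer G x // c j * k * (c i)⁻¹ ∈ H} = Nat.card (stabilizer H (e j)) :=
    fun i hi => by
      rw [card_stabilizer_mul_inv_mem_of_mem ((he_iff i).mp (mem_filter.mp hi).2), hstab]
  have h_notMem : ∀ i ∈ ({i | ¬e i = e j} : Finset ι),
      Nat.card {k : stabilizer G x // c j * k * (c i)⁻¹ ∈ H} = 0 :=
    fun i hi => card_stabilizer_mul_inv_mem_of_notMem (mt (he_iff i).mpr (mem_filter.mp hi).2)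
  rw [card_eq_sum_card_mul_inv_mem hc (fun k : stabilizer G x => c j * k),
    ← sum_filter_add_sum_filter_not univ (fun i => e i = e j), sum_congr rfl h_mem,
    sum_eq_zero h_notMem, sum_const, smul_eq_mul, add_zero]

theorem sum_inv_card_stabilizer_subgroup_of_orbit (hc : ∀ g : G, ∃! i, g * (c i)⁻¹ ∈ H)
    [Finite (stabilizer G x)] {T : Finset X} (hT : ∀ t ∈ T, t ∈ orbit G x)
    (hTu : ∀ g : G, ∃! t, t ∈ T ∧ t ∈ orbit H (g • x)) :
    ∑ t ∈ T, (Nat.card (stabilizer H t) : ℚ)⁻¹ =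
      Fintype.card ι / Nat.card (stabilizer G x) := by
  classical
  choose e he heu using fun i => hTu (c i)
  have he_inj : ∀ i j, e i ∈ orbit H (e j) → e i = e j := fun i j h =>
    heu j (e i) ⟨(he i).1, orbit_eq_iff.mpr (he j).2 ▸ h⟩
  have hT_eq : T = univ.image e := by
    ext t
    refine ⟨fun ht => ?_, fun ht => ?_⟩
    · obtain ⟨g, rfl⟩ := hT t ht
      obtain ⟨i, hi, -⟩ := hc g
      refine mem_image.mpr ⟨i, mem_univ _, (heu i _ ⟨ht, ⟨⟨_, hi⟩, ?_⟩⟩).symm⟩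
      change (g * (c i)⁻¹) • c i • x = g • x
      rw [smul_smul, inv_mul_cancel_right]
    · obtain ⟨i, -, rfl⟩ := mem_image.mp ht
      exact (he i).1
  rw [hT_eq, sum_image' (fun _ => (Nat.card (stabilizer G x) : ℚ)⁻¹) fun j _ => ?_, sum_const,
    card_univ, nsmul_eq_mul, div_eq_mul_inv]
  have hm : (#{i | e i = e j} : ℚ) ≠ 0 :=
    Nat.cast_ne_zero.mpr (card_pos.mpr ⟨j, by simp⟩).ne'
  rw [sum_const, nsmul_eq_mul,
    ← card_filter_mul_card_stabilizer_subgroup hc (fun i => (he i).2) he_inj j,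
    Nat.cast_mul, mul_inv, ← mul_assoc, mul_inv_cancel₀ hm, one_mul]

theorem sum_inv_card_stabilizer_subgroup
    (hc : ∀ g : G, ∃! i, g * (c i)⁻¹ ∈ H) {S : Set X}
    (hS : ∀ g : G, ∀ x ∈ S, g • x ∈ S)
    (hfin : ∀ x ∈ S, Finite (stabilizer G x)) {R R' : Finset X} (hRS : ↑R ⊆ S)
    (hR : ∀ x ∈ S, ∃! r, r ∈ R ∧ r ∈ orbit G x) (hR'S : ↑R' ⊆ S)
    (hR' : ∀ x ∈ S, ∃! r, r ∈ R' ∧ r ∈ orbit H x) :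
    ∑ t ∈ R', (Nat.card (stabilizer H t) : ℚ)⁻¹ =
      Fintype.card ι * ∑ r ∈ R, (Nat.card (stabilizer G r) : ℚ)⁻¹ := by
  classical
  rw [sum_eq_sum_sum_filter_of_existsUnique (fun t ht => hR t (hR'S ht)), mul_sum]
  refine sum_congr rfl fun r hr => ?_
  have := hfin r (hRS hr)
  have hTu (g : G) : ∃! t, t ∈ R'.filter (r ∈ orbit G ·) ∧ t ∈ orbit H (g • r) := by
    obtain ⟨t, ⟨htR', htO⟩, htu⟩ := hR' (g • r) (hS g r (hRS hr))
    refine ⟨t, ⟨mem_filter.mpr ⟨htR', ?_⟩, htO⟩,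
      fun t' ht' => htu t' ⟨(mem_filter.mp ht'.1).1, ht'.2⟩⟩
    exact mem_orbit_symm.mp (orbit_smul g r ▸ mem_orbit_of_mem_orbit_subgroup htO)
  rw [sum_inv_card_stabilizer_subgroup_of_orbit hc
    (fun t ht => mem_orbit_symm.mp (mem_filter.mp ht).2) hTu, div_eq_mul_inv]

end MulAction

namespace QF

def eval (Q : QF) (x y : ℤ) : ℤ := Q.1 * x ^ 2 + Q.2.1 * x * y + Q.2.2 * y ^ 2

variable {Q : QF}

theorem act_one (Q : QF) : act Q 1 = Q := by
  simp [act]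

theorem act_mul (Q : QF) (g h : Matrix (Fin 2) (Fin 2) ℤ) : act Q (g * h) = act (act Q g) h := by
  simp only [act, Matrix.mul_apply, Fin.sum_univ_two, Prod.mk.injEq]
  refine ⟨?_, ?_, ?_⟩ <;> ring

theorem disc_act (Q : QF) (g : Matrix (Fin 2) (Fin 2) ℤ) :
    disc (act Q g) = g.det ^ 2 * disc Q := by
  rw [Matrix.det_fin_two]
  simp only [disc, act]
  ring

theorem act_fst (Q : QF) (g : Matrix (Fin 2) (Fin 2) ℤ) : (act Q g).1 = Q.eval (g 0 0) (g 1 0) :=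
  rfl

theorem act_snd_snd (Q : QF) (g : Matrix (Fin 2) (Fin 2) ℤ) :
    (act Q g).2.2 = Q.eval (g 0 1) (g 1 1) :=
  rfl

theorem four_mul_eval (Q : QF) (x y : ℤ) :
    4 * Q.1 * Q.eval x y = (2 * Q.1 * x + Q.2.1 * y) ^ 2 - disc Q * y ^ 2 := by
  simp only [eval, disc]
  ring

theorem eval_pos (hQ : 0 < Q.1) (hd : disc Q < 0) {x y : ℤ} (hxy : x ≠ 0 ∨ y ≠ 0) :
    0 < Q.eval x y := by
  have h := Q.four_mul_eval x y
  rcases eq_or_ne y 0 with rfl | hy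
  · have hx : x ≠ 0 := hxy.resolve_right (not_not.mpr rfl)
    have : 0 < x ^ 2 := by positivity
    simpa [eval] using mul_pos hQ this
  · have : 0 < y ^ 2 := by positivity
    nlinarith [sq_nonneg (2 * Q.1 * x + Q.2.1 * y)]

theorem finite_setOf_eval_le (hQ : 0 < Q.1) (hd : disc Q < 0) (M : ℤ) :
    {v : ℤ × ℤ | Q.eval v.1 v.2 ≤ M}.Finite := by
  -- `four_mul_eval` bounds `y` and `2 * Q.1 * x + Q.2.1 * y` by `N`, hence `x` by `B`
  set N := 4 * Q.1 * M
  set B := N + |Q.2.1| * N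
  refine ((Set.finite_Icc (-B) B).prod (Set.finite_Icc (-B) B)).subset fun ⟨x, y⟩ hv => ?_
  have h := Q.four_mul_eval x y
  have hM : 4 * Q.1 * Q.eval x y ≤ N := mul_le_mul_of_nonneg_left hv (by positivity)
  have hy : |y| ≤ N := by
    nlinarith [Int.le_self_sq |y|, sq_abs y, sq_nonneg (2 * Q.1 * x + Q.2.1 * y)]
  have hu : |2 * Q.1 * x + Q.2.1 * y| ≤ N := by
    nlinarith [Int.le_self_sq |2 * Q.1 * x + Q.2.1 * y|, sq_abs (2 * Q.1 * x + Q.2.1 * y),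
      sq_nonneg y]
  have hx : |x| ≤ B := by
    have h2 : |x| ≤ |2 * Q.1 * x| := by
      rw [abs_mul, abs_of_pos (by positivity : (0:ℤ) < 2 * Q.1)]
      nlinarith [abs_nonneg x]
    have h3 : |2 * Q.1 * x| ≤ |2 * Q.1 * x + Q.2.1 * y| + |Q.2.1| * |y| := by
      rw [← abs_mul]
      simpa using abs_sub (2 * Q.1 * x + Q.2.1 * y) (Q.2.1 * y)
    nlinarith [mul_le_mul_of_nonneg_left hy (abs_nonneg Q.2.1)]
  have hyB : |y| ≤ B := by nlinarith [mul_nonneg (abs_nonneg Q.2.1) ((abs_nonneg y).trans hy)]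
  exact ⟨abs_le.mp hx, abs_le.mp hyB⟩

/-- `act` is a right action (`act Q (g * h) = act (act Q g) h`), hence an action of the
opposite group. -/
instance : MulAction SL(2, ℤ)ᵐᵒᵖ QF where
  smul g Q := act Q g.unop
  one_smul := act_one
  mul_smul g h Q := by
    change act Q ((g * h).unop : Matrix (Fin 2) (Fin 2) ℤ) = act (act Q h.unop) g.unop
    rw [MulOpposite.unop_mul, Matrix.SpecialLinearGroup.coe_mul, act_mul]

theorem mem_orbit_iff_req {Q Q' : QF} : Q' ∈ orbit SL(2, ℤ)ᵐᵒᵖ Q ↔ req 1 Q Q' :=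
  ⟨fun ⟨g, hg⟩ => ⟨g.unop, ⟨g.unop.2, one_dvd _⟩, hg⟩,
    fun ⟨g, hg, hgQ⟩ => ⟨MulOpposite.op ⟨g, hg.1⟩, hgQ⟩⟩

theorem stabCard_one (Q : QF) : stabCard 1 Q = Nat.card (stabilizer SL(2, ℤ)ᵐᵒᵖ Q) :=
  Nat.card_congr
    { toFun := fun g => ⟨MulOpposite.op ⟨g.1, g.2.1.1⟩, g.2.2⟩
      invFun := fun g => ⟨g.1.unop, ⟨g.1.unop.2, one_dvd _⟩, g.2⟩
      left_inv := fun _ => rfl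
      right_inv := fun _ => rfl }

theorem finite_stabilizer (hQ : 0 < Q.1) (hd : disc Q < 0) :
    Finite (stabilizer SL(2, ℤ)ᵐᵒᵖ Q) := by
  have := (finite_setOf_eval_le hQ hd Q.1).to_subtype
  have := (finite_setOf_eval_le hQ hd Q.2.2).to_subtype
  refine Finite.of_injective (β := {v : ℤ × ℤ | Q.eval v.1 v.2 ≤ Q.1} ×
      {v : ℤ × ℤ | Q.eval v.1 v.2 ≤ Q.2.2})
    (fun g => (⟨(g.1.unop 0 0, g.1.unop 1 0), ?_⟩, ⟨(g.1.unop 0 1, g.1.unop 1 1), ?_⟩)) ?_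
  · exact (act_fst Q _).symm.trans (congrArg Prod.fst g.2) |>.le
  · exact (act_snd_snd Q _).symm.trans (congrArg (·.2.2) g.2) |>.le
  · intro g h hgh
    simp only [Prod.mk.injEq, Subtype.mk.injEq] at hgh
    refine Subtype.ext (MulOpposite.unop_injective (Subtype.ext (Matrix.ext fun i j => ?_)))
    fin_cases i <;> fin_cases j <;> simp [hgh]

theorem smul_mem_QDN_one {D : ℤ} (hD : 0 < D) (g : SL(2, ℤ)ᵐᵒᵖ) (hQ : Q ∈ QDN 1 D) :
    g • Q ∈ QDN 1 D := by
  obtain ⟨hQ1, -, hdisc⟩ := hQ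
  have hg := g.unop.2
  refine ⟨?_, one_dvd _, ?_⟩
  · refine (act_fst Q _).trans_gt (eval_pos hQ1 (by omega) ?_)
    by_contra! h
    rw [Matrix.det_fin_two, h.1, h.2] at hg
    simp at hg
  · change disc (act Q _) = -D
    rw [disc_act, hg, one_pow, one_mul, hdisc]

end QF

abbrev reduceModTwo : SL(2, ℤ) →* SL(2, ZMod 2) :=
  Matrix.SpecialLinearGroup.map (Int.castRingHom (ZMod 2))

theorem reduceModTwo_eq_one_iff (g : SL(2, ℤ)) :
    reduceModTwo g = 1 ↔ 2 ∣ g 0 1 ∧ 2 ∣ g 1 0 := by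
  have hdet : ((g 0 0 * g 1 1 - g 0 1 * g 1 0 : ℤ) : ZMod 2) = 1 := by
    rw [← Matrix.det_fin_two, g.2, Int.cast_one]
  push_cast at hdet
  have h2 (x : ℤ) : 2 ∣ x ↔ (x : ZMod 2) = 0 := (ZMod.intCast_zmod_eq_zero_iff_dvd x 2).symm
  rw [← CongruenceSubgroup.Gamma_mem', CongruenceSubgroup.Gamma_mem, h2, h2]
  generalize (g 0 0 : ZMod 2) = a, (g 0 1 : ZMod 2) = b, (g 1 0 : ZMod 2) = c,
    (g 1 1 : ZMod 2) = d at hdet ⊢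
  revert a b c d
  decide

def thetaGroupModTwo : Subgroup SL(2, ZMod 2) where
  carrier := {g | g = 1 ∨ (g : Matrix (Fin 2) (Fin 2) (ZMod 2)) = !![0, 1; 1, 0]}
  one_mem' := by decide
  mul_mem' := by decide
  inv_mem' := by decide

theorem mem_thetaGroupModTwo {g : SL(2, ZMod 2)} :
    g ∈ thetaGroupModTwo ↔ g = 1 ∨ (g : Matrix (Fin 2) (Fin 2) (ZMod 2)) = !![0, 1; 1, 0] :=
  Iff.rfl

def thetaGroup : Subgroup SL(2, ℤ) :=
  thetaGroupModTwo.comap reduceModTwo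

theorem mem_thetaGroup_iff {g : SL(2, ℤ)} :
    g ∈ thetaGroup ↔ reduceModTwo g = 1 ∨ reduceModTwo g = reduceModTwo ModularGroup.S := by
  have hS : (reduceModTwo ModularGroup.S : Matrix (Fin 2) (Fin 2) (ZMod 2)) = !![0, 1; 1, 0] := by
    decide
  rw [thetaGroup, Subgroup.mem_comap, mem_thetaGroupModTwo, ← hS]
  exact or_congr_right Subtype.ext_iff.symm

def thetaCosetRep : Fin 3 → SL(2, ℤ) :=
  ![1, ⟨!![1, 1; 0, 1], by decide⟩, ⟨!![1, 0; 1, 1], by decide⟩]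

theorem existsUnique_thetaCosetRep (g : SL(2, ℤ)) :
    ∃! i, (thetaCosetRep i)⁻¹ * g ∈ thetaGroup := by
  -- everything only depends on `g` modulo 2, where it is a finite check
  have key : ∀ x : SL(2, ZMod 2),
      ∃! i, (reduceModTwo (thetaCosetRep i))⁻¹ * x ∈ thetaGroupModTwo := by
    simp only [ExistsUnique, mem_thetaGroupModTwo]
    decide
  simpa only [thetaGroup, Subgroup.mem_comap, map_mul, map_inv] using key (reduceModTwo g)

namespace QF

/-- The form `q(2x, y)`. -/
def toLevelFour (q : QF) : QF := (4 * q.1, 2 * q.2.1, q.2.2)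

theorem toLevelFour_injective : Function.Injective toLevelFour := by
  rintro ⟨a, b, c⟩ ⟨a', b', c'⟩ h
  simp only [toLevelFour, Prod.mk.injEq] at h
  obtain ⟨ha, hb, rfl⟩ := h
  rw [mul_right_injective₀ four_ne_zero ha, mul_right_injective₀ two_ne_zero hb]

theorem mem_QDN_four_iff {D : ℤ} {Q : QF} :
    Q ∈ QDN 4 (4 * D) ↔ ∃ q ∈ QDN 1 D, toLevelFour q = Q := by
  constructor
  · rintro ⟨hpos, ⟨a, ha⟩, hdisc⟩
    obtain ⟨b, hb⟩ : 2 ∣ Q.2.1 := by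
      refine Int.prime_two.dvd_of_dvd_pow (n := 2) ⟨2 * (Q.1 * Q.2.2 - D), ?_⟩
      simp only [disc] at hdisc
      linarith
    refine ⟨(a, b, Q.2.2), ⟨by push_cast at ha; omega, one_dvd _, ?_⟩, ?_⟩
    · simp only [disc] at hdisc ⊢
      push_cast at ha
      rw [ha, hb] at hdisc
      linarith
    · ext <;> simp [toLevelFour, ha, hb]
  · rintro ⟨q, ⟨hpos, -, hdisc⟩, rfl⟩
    refine ⟨by simp only [toLevelFour]; omega, ⟨q.1, by simp [toLevelFour]⟩, ?_⟩
    simp only [disc, toLevelFour] at hdisc ⊢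
    linarith

theorem fricke4_toLevelFour (q : QF) :
    fricke4 (toLevelFour q) = toLevelFour (act q ModularGroup.S) := by
  simp [fricke4, toLevelFour, act, ModularGroup.coe_S]

/-- `diag(2, 1) * g * diag(2, 1)⁻¹`. -/
def conjDiagTwo (g : Matrix (Fin 2) (Fin 2) ℤ) : Matrix (Fin 2) (Fin 2) ℤ :=
  !![g 0 0, 2 * g 0 1; g 1 0 / 2, g 1 1]

theorem act_toLevelFour (q : QF) {g : Matrix (Fin 2) (Fin 2) ℤ} (hg : 2 ∣ g 1 0) :
    act (toLevelFour q) g = toLevelFour (act q (conjDiagTwo g)) := by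
  obtain ⟨r, hr⟩ := hg
  simp only [act, toLevelFour, conjDiagTwo, Matrix.of_apply, Matrix.cons_val', Matrix.cons_val_zero,
    Matrix.cons_val_one, Matrix.empty_val', Matrix.cons_val_fin_one, hr,
    Int.mul_ediv_cancel_left _ two_ne_zero, Prod.mk.injEq]
  refine ⟨?_, ?_, ?_⟩ <;> ring

theorem two_dvd_of_mem_Gamma0_four {g : Matrix (Fin 2) (Fin 2) ℤ} (hg : g ∈ Gamma0 4) :
    2 ∣ g 1 0 :=
  (dvd_mul_right 2 2).trans (by exact_mod_cast hg.2)

def gamma0FourToSL (g : Gamma0 4) : SL(2, ℤ) :=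
  ⟨conjDiagTwo g, by
    obtain ⟨r, hr⟩ := two_dvd_of_mem_Gamma0_four g.2
    rw [← g.2.1, Matrix.det_fin_two, Matrix.det_fin_two]
    simp only [conjDiagTwo, Matrix.of_apply, Matrix.cons_val', Matrix.cons_val_zero,
      Matrix.cons_val_one, Matrix.empty_val', Matrix.cons_val_fin_one, hr,
      Int.mul_ediv_cancel_left _ two_ne_zero]
    ring⟩

theorem reduceModTwo_gamma0FourToSL (g : Gamma0 4) : reduceModTwo (gamma0FourToSL g) = 1 := by
  rw [reduceModTwo_eq_one_iff]
  exact ⟨dvd_mul_right 2 _, Int.dvd_div_of_mul_dvd (by exact_mod_cast g.2.2)⟩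

theorem gamma0FourToSL_injective : Function.Injective gamma0FourToSL := by
  intro g g' h
  have h2 := two_dvd_of_mem_Gamma0_four g.2
  have h2' := two_dvd_of_mem_Gamma0_four g'.2
  have hentry (i j : Fin 2) := congrArg (fun k : SL(2, ℤ) => k i j) h
  refine Subtype.ext (Matrix.ext fun i j => ?_)
  fin_cases i <;> fin_cases j
  · simpa [gamma0FourToSL, conjDiagTwo] using hentry 0 0
  · simpa [gamma0FourToSL, conjDiagTwo] using hentry 0 1
  · have := hentry 1 0
    simp [gamma0FourToSL, conjDiagTwo] at this
    change g.1 1 0 = g'.1 1 0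
    omega
  · simpa [gamma0FourToSL, conjDiagTwo] using hentry 1 1

theorem exists_gamma0FourToSL_eq {h : SL(2, ℤ)} (hh : reduceModTwo h = 1) :
    ∃ g, gamma0FourToSL g = h := by
  obtain ⟨⟨b, hb⟩, ⟨c, hc⟩⟩ := (reduceModTwo_eq_one_iff h).mp hh
  have hdet := h.2
  rw [Matrix.det_fin_two, hb, hc] at hdet
  refine ⟨⟨!![h 0 0, b; 4 * c, h 1 1], ?_, ?_⟩, ?_⟩
  · rw [Matrix.det_fin_two_of]; linarith
  · simp
  · ext i j
    fin_cases i <;> fin_cases j <;> simp [gamma0FourToSL, conjDiagTwo, hb, hc]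
    omega

/-- Elements of `Γ₀^*(4)` are `g` or `g` followed by `W₄`, for `g ∈ Γ₀(4)`; conjugation by
`diag(2, 1)` sends them to `Γ(2)` and `Γ(2) S` respectively, which together make up `Γ_θ`. -/
def gamma0FourStarToTheta : Gamma0 4 ⊕ Gamma0 4 → thetaGroup :=
  Sum.elim
    (fun g => ⟨gamma0FourToSL g, mem_thetaGroup_iff.mpr (.inl (reduceModTwo_gamma0FourToSL g))⟩)
    (fun g => ⟨gamma0FourToSL g * ModularGroup.S, mem_thetaGroup_iff.mpr
      (.inr (by rw [map_mul, reduceModTwo_gamma0FourToSL, one_mul]))⟩)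

theorem gamma0FourStarToTheta_bijective : Function.Bijective gamma0FourStarToTheta := by
  have hS : reduceModTwo ModularGroup.S ≠ 1 := by decide
  refine ⟨?_, fun ⟨h, hh⟩ => ?_⟩
  · rintro (g | g) (g' | g') hgg' <;>
      simp only [gamma0FourStarToTheta, Sum.elim_inl, Sum.elim_inr, Subtype.mk.injEq] at hgg'
    · rw [gamma0FourToSL_injective hgg']
    · refine (hS ?_).elim
      simpa [reduceModTwo_gamma0FourToSL] using (congrArg reduceModTwo hgg').symm
    · refine (hS ?_).elim
      simpa [reduceModTwo_gamma0FourToSL] using congrArg reduceModTwo hgg'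
    · rw [gamma0FourToSL_injective (mul_right_cancel hgg')]
  · rcases mem_thetaGroup_iff.mp hh with hh | hh
    · obtain ⟨g, rfl⟩ := exists_gamma0FourToSL_eq hh
      exact ⟨.inl g, rfl⟩
    · obtain ⟨g, hg⟩ := exists_gamma0FourToSL_eq (h := h * ModularGroup.S⁻¹)
        (by rw [map_mul, map_inv, hh, mul_inv_cancel])
      exact ⟨.inr g, Subtype.ext (by simp [gamma0FourStarToTheta, hg])⟩

def actStar4 (Q : QF) : Gamma0 4 ⊕ Gamma0 4 → QF :=
  Sum.elim (fun g => act Q g) (fun g => fricke4 (act Q g))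

theorem reqStar4_iff_exists_actStar4 {Q Q' : QF} : reqStar4 Q Q' ↔ ∃ x, actStar4 Q x = Q' := by
  constructor
  · rintro ⟨g, hg, h | h⟩
    exacts [⟨.inl ⟨g, hg⟩, h⟩, ⟨.inr ⟨g, hg⟩, h⟩]
  · rintro ⟨g | g, h⟩
    exacts [⟨g, g.2, .inl h⟩, ⟨g, g.2, .inr h⟩]

theorem stabStarCard4_eq_card (Q : QF) [Finite {x // actStar4 Q x = Q}] :
    stabStarCard4 Q = Nat.card {x // actStar4 Q x = Q} := by
  let A := {g : Gamma0 4 // act Q g = Q}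
  let B := {g : Gamma0 4 // fricke4 (act Q g) = Q}
  let e : {x // actStar4 Q x = Q} ≃ A ⊕ B := Equiv.subtypeSum
  have : Finite (A ⊕ B) := Finite.of_equiv _ e
  have := Finite.sum_left (α := A) B
  have := Finite.sum_right A (β := B)
  rw [Nat.card_congr e, Nat.card_sum, stabStarCard4]
  congr 1 <;> exact Nat.card_congr (Equiv.subtypeSubtypeEquivSubtypeInter (· ∈ Gamma0 4) _).symm

theorem actStar4_toLevelFour (q : QF) (x : Gamma0 4 ⊕ Gamma0 4) :
    actStar4 (toLevelFour q) x = toLevelFour (act q (gamma0FourStarToTheta x)) := by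
  rcases x with g | g
  · exact act_toLevelFour q (two_dvd_of_mem_Gamma0_four g.2)
  · simp only [actStar4, gamma0FourStarToTheta, Sum.elim_inr, Matrix.SpecialLinearGroup.coe_mul,
      act_mul]
    rw [act_toLevelFour q (two_dvd_of_mem_Gamma0_four g.2), fricke4_toLevelFour]
    rfl

theorem reqStar4_toLevelFour_iff {a b : QF} :
    reqStar4 (toLevelFour a) (toLevelFour b) ↔ b ∈ orbit thetaGroup.op a := by
  simp only [reqStar4_iff_exists_actStar4, actStar4_toLevelFour, toLevelFour_injective.eq_iff]
  rw [← gamma0FourStarToTheta_bijective.surjective.exists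
    (p := fun h : thetaGroup => act a h = b)]
  exact ⟨fun ⟨h, hh⟩ => ⟨⟨.op h, h.2⟩, hh⟩,
    fun ⟨h, hh⟩ => ⟨⟨h.1.unop, h.2⟩, hh⟩⟩

theorem stabStarCard4_toLevelFour (q : QF) [Finite (stabilizer SL(2, ℤ)ᵐᵒᵖ q)] :
    stabStarCard4 (toLevelFour q) = Nat.card (stabilizer thetaGroup.op q) := by
  let e : {x // actStar4 (toLevelFour q) x = toLevelFour q} ≃ stabilizer thetaGroup.op q :=
    ((Equiv.subtypeEquivRight fun x => by
        rw [actStar4_toLevelFour, toLevelFour_injective.eq_iff]; rfl).trans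
      ((Equiv.ofBijective _ gamma0FourStarToTheta_bijective).subtypeEquiv
        (q := fun h : thetaGroup => act q h = q) fun _ => Iff.rfl)).trans
    { toFun := fun h => ⟨⟨.op h.1, h.1.2⟩, h.2⟩
      invFun := fun h => ⟨⟨h.1.1.unop, h.1.2⟩, h.2⟩
      left_inv := fun _ => rfl
      right_inv := fun _ => rfl }
  have : Finite (stabilizer thetaGroup.op q) :=
    Finite.of_injective (fun h => (⟨h.1.1, h.2⟩ : stabilizer SL(2, ℤ)ᵐᵒᵖ q))
      fun h h' hh => Subtype.ext (Subtype.ext (by simpa using congrArg Subtype.val hh))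
  have := Finite.of_equiv _ e.symm
  rw [stabStarCard4_eq_card, Nat.card_congr e]

theorem isReps_preimage_toLevelFour {D : ℤ} {R4 : Finset QF}
    (h4 : IsReps (QDN 4 (4 * D)) reqStar4 R4) :
    IsReps (QDN 1 D) (fun q r => r ∈ orbit thetaGroup.op q)
      (R4.preimage toLevelFour toLevelFour_injective.injOn) := by
  refine ⟨fun q hq => ?_, fun q hq => ?_⟩
  · obtain ⟨q', hq', hq'q⟩ := mem_QDN_four_iff.mp (h4.1 (mem_preimage.mp hq))
    rwa [← toLevelFour_injective hq'q]
  · obtain ⟨Q, ⟨hQ, hqQ⟩, hQu⟩ := h4.2 _ (mem_QDN_four_iff.mpr ⟨q, hq, rfl⟩)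
    obtain ⟨r, -, rfl⟩ := mem_QDN_four_iff.mp (h4.1 hQ)
    refine ⟨r, ⟨mem_preimage.mpr hQ, reqStar4_toLevelFour_iff.mp hqQ⟩, fun r' hr' => ?_⟩
    exact toLevelFour_injective
      (hQu _ ⟨mem_preimage.mp hr'.1, reqStar4_toLevelFour_iff.mpr hr'.2⟩)

end QF

open QF in
theorem class_number_relation_general (D : ℕ) (hD : 0 < D)
    (R1 R4 : Finset QF)
    (h1 : IsReps (QDN 1 (D : ℤ)) (req 1) R1)
    (h4 : IsReps (QDN 4 (4 * D : ℤ)) reqStar4 R4) :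
    ∑ Q ∈ R4, (2 : ℚ) / (stabStarCard4 Q : ℚ)
      = 3 * ∑ Q ∈ R1, (2 : ℚ) / (stabCard 1 Q : ℚ) := by
  have hDZ : (0 : ℤ) < D := by exact_mod_cast hD
  have hfin (q : QF) (hq : q ∈ QDN 1 D) : Finite (stabilizer SL(2, ℤ)ᵐᵒᵖ q) :=
    finite_stabilizer hq.1 (by rw [hq.2.2]; omega)
  have hc (g : SL(2, ℤ)ᵐᵒᵖ) :
      ∃! i, g * (MulOpposite.op (thetaCosetRep i))⁻¹ ∈ thetaGroup.op := by
    simpa [Subgroup.mem_op] using existsUnique_thetaCosetRep g.unop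
  have hR4 := isReps_preimage_toLevelFour h4
  have hmass := sum_inv_card_stabilizer_subgroup hc (fun g _ hq => smul_mem_QDN_one hDZ g hq)
    hfin h1.1 (fun q hq => by simpa only [mem_orbit_iff_req] using h1.2 q hq) hR4.1 hR4.2
  have hR4_range (Q : QF) (hQ : Q ∈ R4) : Q ∈ Set.range toLevelFour :=
    let ⟨q, _, hq⟩ := mem_QDN_four_iff.mp (h4.1 hQ); ⟨q, hq⟩
  rw [← sum_preimage toLevelFour R4 toLevelFour_injective.injOn _ fun Q hQ hQ' =>
    (hQ' (hR4_range Q hQ)).elim]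
  calc ∑ q ∈ R4.preimage toLevelFour _, (2 : ℚ) / stabStarCard4 (toLevelFour q)
      = 2 * ∑ q ∈ R4.preimage toLevelFour _,
          (Nat.card (stabilizer thetaGroup.op q) : ℚ)⁻¹ := by
        rw [mul_sum]
        refine sum_congr rfl fun q hq => ?_
        have := hfin q (hR4.1 hq)
        rw [stabStarCard4_toLevelFour, div_eq_mul_inv]
    _ = 3 * ∑ Q ∈ R1, (2 : ℚ) / stabCard 1 Q := by
        simp only [hmass, Fintype.card_fin, stabCard_one, div_eq_mul_inv, ← mul_sum]
        push_cast
        ring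

/-- `H₄^*(4D) = 3 H(D)`: the `Γ₀^*(4)`-class number of `Q_{4D,4}`, classes weighted by
the reciprocal of the stabilizer order (in the projective group, whence the factor `2`),
equals three times the Hurwitz class number `H(D)`. -/
theorem class_number_relation (D : ℕ) (hD : 0 < D) (hmod : D % 4 = 0 ∨ D % 4 = 3)
    (R1 R4 : Finset QF)
    (h1 : IsReps (QDN 1 (D : ℤ)) (req 1) R1)
    (h4 : IsReps (QDN 4 (4 * D : ℤ)) reqStar4 R4) :
    ∑ Q ∈ R4, (2 : ℚ) / (stabStarCard4 Q : ℚ)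
      = 3 * ∑ Q ∈ R1, (2 : ℚ) / (stabCard 1 Q : ℚ) :=
  class_number_relation_general D hD R1 R4 h1 h4
end

section
/- Let m, N ≥ 1 be integers and let s be a complex number with Re(s) > 1. Then the product over primes p not dividing N of the (finite) local sums Σ_{k ≥ 0} u_m(p^k) p^{−2sk} converges and equals ζ(2s)^{−1} · ( ∏_{p | N} (1 − p^{−2s}) )^{−1} · σ_{1−2s}(m_N), where ζ is the Riemann zeta function. -/
/-- The Ramanujan sum `u_n(q)`, the sum of the `n`-th powers of the primitive
`q`-th roots of unity. -/
noncomputable def ramanujanSum (n q : ℕ) : ℂ :=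
  ∑ x ∈ Finset.filter (fun k => Nat.Coprime k q) (Finset.range q),
    Complex.exp (2 * Real.pi * Complex.I * n * x / q)

/-- `m_N`: the largest divisor of `m` coprime to `N`. -/
def coprimePart (m N : ℕ) : ℕ :=
  ∏ p ∈ m.primeFactors.filter (fun p => ¬ p ∣ N), p ^ m.factorization p

/-!
For a prime `p`, the primitive residues mod `p^(k+1)` are all residues minus the multiples of `p`,
so `u_m(p^(k+1)) = [p^(k+1) ∣ m] p^(k+1) - [p^k ∣ m] p^k`. With `x = p^(-2s)` the local sum
therefore telescopes to `(1 - x) ∑_{j ≤ v_p(m)} (p x)^j`. Over all primes the factors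
`1 - p^(-2s)` multiply to `ζ(2s)⁻¹`, so over `p ∤ N` they give
`ζ(2s)⁻¹ ∏_{p ∣ N} (1 - p^(-2s))⁻¹`; the remaining factors are the local factors of the
multiplicative function `σ_{1-2s}` at `m_N`, equal to `1` unless `p ∣ m`.
-/

open Finset Complex ArithmeticFunction

lemma sum_range_exp_eq_ite (n : ℕ) {q : ℕ} (hq : q ≠ 0) :
    ∑ x ∈ range q, exp (2 * Real.pi * I * n * x / q) = if q ∣ n then (q : ℂ) else 0 := by
  have hζ := isPrimitiveRoot_exp q hq
  have hterm : ∀ x : ℕ,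
      exp (2 * Real.pi * I * n * x / q) = (exp (2 * Real.pi * I / q) ^ n) ^ x := by
    intro x
    rw [← pow_mul, ← exp_nat_mul]
    congr 1
    push_cast
    ring
  rw [sum_congr rfl fun x _ => hterm x]
  split_ifs with h
  · simp [(hζ.pow_eq_one_iff_dvd n).2 h]
  · rw [geom_sum_eq ((hζ.pow_eq_one_iff_dvd n).not.2 h), pow_right_comm,
      hζ.pow_eq_one, one_pow, sub_self, zero_div]

lemma sum_filter_dvd_range_mul {M : Type*} [AddCommMonoid M] (f : ℕ → M) {p : ℕ}
    (hp : p ≠ 0) (a : ℕ) :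
    ∑ x ∈ (range (p * a)).filter (p ∣ ·), f x = ∑ y ∈ range a, f (p * y) := by
  rw [← sum_image fun x _ y _ h => Nat.eq_of_mul_eq_mul_left (Nat.pos_of_ne_zero hp) h]
  congr 1
  ext x
  simp only [mem_filter, mem_range, mem_image]
  constructor
  · rintro ⟨hx, y, rfl⟩
    exact ⟨y, Nat.lt_of_mul_lt_mul_left hx, rfl⟩
  · rintro ⟨y, hy, rfl⟩
    exact ⟨Nat.mul_lt_mul_of_pos_left hy (Nat.pos_of_ne_zero hp), dvd_mul_right p y⟩

lemma ramanujanSum_one (n : ℕ) : ramanujanSum n 1 = 1 := by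
  simp [ramanujanSum]

lemma ramanujanSum_prime_pow_succ {p : ℕ} (hp : p.Prime) (n k : ℕ) :
    ramanujanSum n (p ^ (k + 1)) =
      (if p ^ (k + 1) ∣ n then ((p ^ (k + 1) : ℕ) : ℂ) else 0)
        - if p ^ k ∣ n then ((p ^ k : ℕ) : ℂ) else 0 := by
  set e : ℕ → ℕ → ℂ := fun q x => exp (2 * Real.pi * I * n * x / q)
  have hcoprime : (range (p ^ (k + 1))).filter (·.Coprime (p ^ (k + 1)))
      = (range (p ^ (k + 1))).filter (¬ p ∣ ·) :=
    filter_congr fun x _ => by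
      rw [Nat.coprime_pow_right_iff k.succ_pos, Nat.coprime_comm, hp.coprime_iff_not_dvd]
  have hmultiples : ∑ x ∈ (range (p ^ (k + 1))).filter (p ∣ ·), e (p ^ (k + 1)) x
      = ∑ y ∈ range (p ^ k), e (p ^ k) y := by
    rw [pow_succ', sum_filter_dvd_range_mul _ hp.ne_zero]
    refine sum_congr rfl fun y _ => congrArg exp ?_
    have : (p : ℂ) ≠ 0 := by exact_mod_cast hp.ne_zero
    push_cast
    field_simp
  rw [ramanujanSum, hcoprime, ← sum_range_exp_eq_ite n (pow_ne_zero _ hp.ne_zero),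
    ← sum_range_exp_eq_ite n (pow_ne_zero _ hp.ne_zero), eq_sub_iff_add_eq,
    ← sum_filter_add_sum_filter_not (range (p ^ (k + 1))) (p ∣ ·), hmultiples]
  exact add_comm _ _

lemma tsum_ramanujanSum_prime_pow_mul_pow {m p : ℕ} (hm : m ≠ 0) (hp : p.Prime) (x : ℂ) :
    ∑' k, ramanujanSum m (p ^ k) * x ^ k
      = (1 - x) * ∑ j ∈ range (m.factorization p + 1), ((p : ℂ) * x) ^ j := by
  set v := m.factorization p
  obtain ⟨a, ha⟩ : ∃ a : ℕ → ℂ, ∀ k, a k = if k ≤ v then (p : ℂ) ^ k else 0 :=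
    ⟨_, fun _ => rfl⟩
  have hu : ∀ k, ramanujanSum m (p ^ (k + 1)) = a (k + 1) - a k := fun k => by
    simp only [ramanujanSum_prime_pow_succ hp, hp.pow_dvd_iff_le_factorization hm, ha]
    push_cast
    rfl
  have hu₀ : ramanujanSum m (p ^ 0) = a 0 := by simp [ramanujanSum_one, ha]
  have hvanish : ∀ k ∉ range (v + 2), ramanujanSum m (p ^ k) * x ^ k = 0 := by
    intro k hk
    rw [mem_range, not_lt] at hk
    obtain ⟨j, rfl⟩ : ∃ j, k = j + 1 := ⟨k - 1, by omega⟩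
    rw [hu, ha, ha, if_neg (by omega), if_neg (by omega), sub_zero, zero_mul]
  have hstep : ∀ k,
      (a (k + 1) - a k) * x ^ (k + 1) = a (k + 1) * x ^ (k + 1) - x * (a k * x ^ k) :=
    fun k => by ring
  rw [tsum_eq_sum hvanish]
  calc ∑ k ∈ range (v + 2), ramanujanSum m (p ^ k) * x ^ k
      = ∑ k ∈ range (v + 1), (a (k + 1) - a k) * x ^ (k + 1) + a 0 := by
        rw [sum_range_succ', hu₀, pow_zero, mul_one]
        simp only [hu]
    _ = ∑ k ∈ range (v + 2), a k * x ^ k - x * ∑ k ∈ range (v + 1), a k * x ^ k := by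
        rw [sum_congr rfl fun k _ => hstep k, sum_sub_distrib, ← mul_sum,
          sum_range_succ' (fun k => a k * x ^ k) (v + 1), pow_zero, mul_one]
        ring
    _ = (1 - x) * ∑ k ∈ range (v + 1), a k * x ^ k := by
        rw [sum_range_succ, ha, if_neg (by omega), zero_mul, add_zero]
        ring
    _ = (1 - x) * ∑ j ∈ range (v + 1), ((p : ℂ) * x) ^ j := by
        refine congrArg _ (sum_congr rfl fun k hk => ?_)
        rw [ha, if_pos (Nat.lt_succ_iff.mp (mem_range.mp hk)), mul_pow]

lemma isMultiplicative_toArithmeticFunction_natCast_cpow (w : ℂ) :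
    (toArithmeticFunction fun n : ℕ => (n : ℂ) ^ w).IsMultiplicative := by
  refine IsMultiplicative.iff_ne_zero.mpr ⟨by simp [toArithmeticFunction], fun hm hn _ => ?_⟩
  simp only [toArithmeticFunction, coe_mk, mul_ne_zero hm hn, hm, hn, if_false]
  push_cast
  exact natCast_mul_natCast_cpow _ _ w

lemma ArithmeticFunction.IsMultiplicative.map_coprimePart {R : Type*} [CommMonoidWithZero R]
    {f : ArithmeticFunction R} (hf : f.IsMultiplicative) (m N : ℕ) :
    f (coprimePart m N)
      = ∏ p ∈ m.primeFactors.filter (¬ · ∣ N), f (p ^ m.factorization p) :=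
  hf.map_prod _ _ fun _ hp _ hq hpq => Nat.Coprime.pow _ _ <|
    (Nat.coprime_primes (Nat.prime_of_mem_primeFactors (mem_filter.mp hp).1)
      (Nat.prime_of_mem_primeFactors (mem_filter.mp hq).1)).mpr hpq

lemma sum_divisors_coprimePart_cpow (m N : ℕ) (w : ℂ) :
    ∑ d ∈ (coprimePart m N).divisors, (d : ℂ) ^ w
      = ∏ p ∈ m.primeFactors.filter (¬ · ∣ N),
          ∑ j ∈ range (m.factorization p + 1), ((p ^ j : ℕ) : ℂ) ^ w := by
  set σ : ArithmeticFunction ℂ := zeta * toArithmeticFunction fun n : ℕ => (n : ℂ) ^ w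
  have hσ : ∀ n, σ n = ∑ d ∈ n.divisors, (d : ℂ) ^ w := fun n =>
    coe_zeta_mul_apply.trans <| sum_congr rfl fun d hd => by
      simp [toArithmeticFunction, Nat.ne_of_gt (Nat.pos_of_mem_divisors hd)]
  rw [← hσ, (isMultiplicative_zeta.natCast.mul
    (isMultiplicative_toArithmeticFunction_natCast_cpow w)).map_coprimePart]
  refine prod_congr rfl fun p hp => ?_
  rw [hσ, Nat.sum_divisors_prime_pow (Nat.prime_of_mem_primeFactors (mem_filter.mp hp).1)]

lemma natCast_pow_cpow_one_sub {p : ℕ} (hp : p ≠ 0) (j : ℕ) (z : ℂ) :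
    ((p ^ j : ℕ) : ℂ) ^ (1 - z) = ((p : ℂ) * (p : ℂ) ^ (-z)) ^ j := by
  rw [Nat.cast_pow, ← natCast_cpow_natCast_mul, cpow_nat_mul, sub_eq_add_neg,
    cpow_add _ _ (by exact_mod_cast hp), cpow_one]

lemma HasProd.subtype_prime_not_dvd {K : Type*} [CommGroupWithZero K] [TopologicalSpace K]
    [ContinuousMul K] {f : ℕ → K} {a : K} {N : ℕ} (hN : N ≠ 0)
    (hf : HasProd (fun p : Nat.Primes => f p) a) (hf₀ : ∀ p ∈ N.primeFactors, f p ≠ 0) :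
    HasProd (fun p : {p : ℕ // p.Prime ∧ ¬ p ∣ N} => f p)
      (a * (∏ p ∈ N.primeFactors, f p)⁻¹) := by
  have hprimes : HasProd ({p | p.Prime}.mulIndicator f) a :=
    hasProd_subtype_iff_mulIndicator.mp hf
  have hdivisors : HasProd ((N.primeFactors : Set ℕ).mulIndicator fun n => (f n)⁻¹)
      (∏ p ∈ N.primeFactors, f p)⁻¹ := by
    rw [← prod_inv_distrib]
    exact hasProd_subtype_iff_mulIndicator.mp (N.primeFactors.hasProd _)
  refine (hasProd_subtype_iff_mulIndicator (f := f) (s := {p | p.Prime ∧ ¬ p ∣ N})).mpr ?_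
  convert hprimes.mul hdivisors using 1
  funext n
  -- at a prime `n ∣ N` the right side is `f n * (f n)⁻¹ = 1`
  by_cases hn : n.Prime <;> by_cases hnN : n ∣ N
  · simp [Set.mulIndicator, hn, hnN, hN, hf₀ n (Nat.mem_primeFactors.mpr ⟨hn, hnN, hN⟩)]
  all_goals simp [Set.mulIndicator, hn, hnN]

lemma hasProd_sum_range_factorization_cpow (m N : ℕ) (w : ℂ) :
    HasProd (fun p : {p : ℕ // p.Prime ∧ ¬ p ∣ N} =>
        ∑ j ∈ range (m.factorization p + 1), ((p.1 ^ j : ℕ) : ℂ) ^ w)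
      (∑ d ∈ (coprimePart m N).divisors, (d : ℂ) ^ w) := by
  have hS : ∀ p ∈ m.primeFactors.filter (¬ · ∣ N), p.Prime ∧ ¬ p ∣ N := fun p hp =>
    ⟨Nat.prime_of_mem_primeFactors (mem_filter.mp hp).1, (mem_filter.mp hp).2⟩
  rw [sum_divisors_coprimePart_cpow, ← prod_subtype_of_mem _ hS]
  refine hasProd_prod_of_ne_finset_one fun p hp => ?_
  have hpm : p.1 ∉ m.primeFactors := fun h => hp (mem_subtype.mpr (mem_filter.mpr ⟨h, p.2.2⟩))
  rw [← Nat.support_factorization, Finsupp.notMem_support_iff] at hpm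
  simp [hpm]

theorem euler_product_away_from_N (m N : ℕ) (hm : 0 < m) (hN : 0 < N)
    (s : ℂ) (hs : 1 < s.re) :
    Multipliable (fun p : {p : ℕ // p.Prime ∧ ¬ p ∣ N} =>
        ∑' k : ℕ, ramanujanSum m (p.1 ^ k) * (p.1 : ℂ) ^ (-(2 * s) * (k : ℂ)))
    ∧ (∏' p : {p : ℕ // p.Prime ∧ ¬ p ∣ N},
          ∑' k : ℕ, ramanujanSum m (p.1 ^ k) * (p.1 : ℂ) ^ (-(2 * s) * (k : ℂ)))
        = (riemannZeta (2 * s))⁻¹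
            * (∏ p ∈ N.primeFactors, (1 - (p : ℂ) ^ (-(2 * s))))⁻¹
            * ∑ d ∈ (coprimePart m N).divisors, (d : ℂ) ^ (1 - 2 * s) := by
  have h2s : 1 < (2 * s).re := by
    simp only [mul_re, re_ofNat, im_ofNat, zero_mul, sub_zero]
    linarith
  have hlocal : ∀ p : {p : ℕ // p.Prime ∧ ¬ p ∣ N},
      ∑' k : ℕ, ramanujanSum m (p.1 ^ k) * (p.1 : ℂ) ^ (-(2 * s) * (k : ℂ))
        = (1 - (p.1 : ℂ) ^ (-(2 * s)))
          * ∑ j ∈ range (m.factorization p + 1), ((p.1 ^ j : ℕ) : ℂ) ^ (1 - 2 * s) := by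
    intro p
    simp only [cpow_mul_nat, natCast_pow_cpow_one_sub p.2.1.ne_zero]
    exact tsum_ramanujanSum_prime_pow_mul_pow hm.ne' p.2.1 _
  have hζ : HasProd (fun p : Nat.Primes => 1 - (p : ℂ) ^ (-(2 * s)))
      (riemannZeta (2 * s))⁻¹ := by
    simpa using (riemannZeta_eulerProduct_hasProd h2s).inv₀ (riemannZeta_ne_zero_of_one_lt_re h2s)
  have hprod := (hζ.subtype_prime_not_dvd (f := fun n : ℕ => 1 - (n : ℂ) ^ (-(2 * s))) hN.ne'
    fun p hp => one_sub_prime_cpow_ne_zero (Nat.prime_of_mem_primeFactors hp) h2s).mul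
      (hasProd_sum_range_factorization_cpow m N (1 - 2 * s))
  simp only [hlocal]
  exact ⟨hprod.multipliable, hprod.tprod_eq⟩
end

section
/- Let m, N ≥ 1 with gcd(m, N) = 1. Then the explicit constant −c_m of Theorem 'cons' satisfies −c_m = 24 (m/m_N) σ(m_N) ( ∏_{p|N} (1 − p^{−2}) )^{−1} Σ_{e‖N} (1/e) ∏_{p|N/e} δ_e(p) p^{1−β_{e,p}} ((1 − p^{β_{e,p}−α_p−2})(1+p^{−1}) − 1) = 24 σ(m) · ( Σ_{e‖N} μ(N/e)·e ) / ( N² ∏_{p|N} (1 − p^{−2}) ), where μ is the Möbius function. In particular, c_m = σ(m)·c_1 whenever gcd(m, N) = 1. -/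
/-- The explicit constant `−c_m` of Theorem `cons`:
`24 (m/m_N) σ(m_N) (∏_{p|N}(1 − p^{−2}))⁻¹ Σ_{e‖N} (1/e) ∏_{p|N/e} δ_e(p) p^{1−β_{e,p}}
((1 − p^{β_{e,p}−α_p−2})(1 + p^{−1}) − 1)`. -/
noncomputable def minusCm (m N : ℕ) : ℝ :=
  24 * ((m / coprimePart m N : ℕ) : ℝ)
    * ((∑ d ∈ (coprimePart m N).divisors, d : ℕ) : ℝ)
    * (∏ p ∈ N.primeFactors, (1 - (p : ℝ) ^ (-2 : ℤ)))⁻¹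
    * ∑ e ∈ N.divisors.filter (fun e => Nat.Coprime e (N / e)),
        (1 / (e : ℝ)) *
          ∏ p ∈ (N / e).primeFactors,
            (if (N / e).factorization p ≤ m.factorization p + 1 then (1 : ℝ) else 0)
              * (p : ℝ) ^ ((1 : ℤ) - ((N / e).factorization p : ℤ))
              * ((1 - (p : ℝ) ^ (((N / e).factorization p : ℤ) - (m.factorization p : ℤ) - 2))
                  * (1 + (p : ℝ)⁻¹) - 1)

open ArithmeticFunction
open scoped ArithmeticFunction.Moebius

lemma coprimePart_eq_self {m N : ℕ} (hm : m ≠ 0) (h : m.Coprime N) : coprimePart m N = m := by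
  unfold coprimePart
  rw [Finset.filter_true_of_mem]
  · exact (Nat.prod_primeFactors_pow_factorization hm).symm
  · exact fun p hp hpN => (Nat.prime_of_mem_primeFactors hp).not_dvd_one
      (h ▸ Nat.dvd_gcd (Nat.dvd_of_mem_primeFactors hp) hpN)

lemma factorization_eq_zero_of_coprime_of_dvd {m N p : ℕ} (h : m.Coprime N) (hp : p.Prime)
    (hpN : p ∣ N) : m.factorization p = 0 :=
  Nat.factorization_eq_zero_of_not_dvd fun hpm => hp.not_dvd_one (h ▸ Nat.dvd_gcd hpm hpN)

/-- The factor at `p` in `minusCm`, in terms of `α = α_p` and `β = β_{e,p}`. -/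
noncomputable def localFactor (α β : ℕ) (p : ℝ) : ℝ :=
  (if β ≤ α + 1 then 1 else 0) * p ^ ((1 : ℤ) - β) * ((1 - p ^ ((β : ℤ) - α - 2)) * (1 + p⁻¹) - 1)

lemma localFactor_zero_eq_moebius_div {p k : ℕ} (hp : p.Prime) (hk : k ≠ 0) :
    localFactor 0 k p = (μ (p ^ k) : ℝ) / ((p ^ k : ℕ) : ℝ) ^ 2 := by
  have hp0 : (p : ℝ) ≠ 0 := by exact_mod_cast hp.ne_zero
  rw [moebius_apply_prime_pow hp hk, localFactor]
  rcases eq_or_ne k 1 with rfl | hk1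
  · norm_num
    field_simp
    ring
  · rw [if_neg (by omega), if_neg hk1]
    simp

lemma prod_localFactor_zero {n : ℕ} (hn : n ≠ 0) :
    ∏ p ∈ n.primeFactors, localFactor 0 (n.factorization p) p = (μ n : ℝ) / (n : ℝ) ^ 2 := by
  have hmul : ∀ x y : ℕ, x.Coprime y →
      (μ (x * y) : ℝ) / ((x * y : ℕ) : ℝ) ^ 2 = (μ x / (x : ℝ) ^ 2) * (μ y / (y : ℝ) ^ 2) := by
    intro x y hxy
    rw [isMultiplicative_moebius.map_mul_of_coprime hxy]
    push_cast
    ring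
  rw [Nat.multiplicative_factorization (fun n => (μ n : ℝ) / (n : ℝ) ^ 2) hmul (by simp) hn,
    Nat.prod_factorization_eq_prod_primeFactors]
  refine Finset.prod_congr rfl fun p hp => localFactor_zero_eq_moebius_div
    (Nat.prime_of_mem_primeFactors hp) (Finsupp.mem_support_iff.mp (by rwa [Nat.support_factorization]))

lemma one_div_mul_prod_localFactor_zero {N e : ℕ} (hN : N ≠ 0) (he : e ∣ N) :
    1 / (e : ℝ) * ∏ p ∈ (N / e).primeFactors, localFactor 0 ((N / e).factorization p) p
      = (μ (N / e) : ℝ) * e / (N : ℝ) ^ 2 := by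
  obtain ⟨k, rfl⟩ := he
  have he0 : e ≠ 0 := left_ne_zero_of_mul hN
  have hk0 : k ≠ 0 := right_ne_zero_of_mul hN
  rw [Nat.mul_div_cancel_left k (Nat.pos_of_ne_zero he0), prod_localFactor_zero hk0]
  push_cast
  field_simp

lemma minusCm_eq_of_coprime {m N : ℕ} (hm : m ≠ 0) (h : m.Coprime N) :
    minusCm m N
      = 24 * ((∑ d ∈ m.divisors, d : ℕ) : ℝ)
          * (∑ e ∈ N.divisors.filter (fun e => e.Coprime (N / e)), (μ (N / e) : ℝ) * e)
          / ((N : ℝ) ^ 2 * ∏ p ∈ N.primeFactors, (1 - (p : ℝ) ^ (-2 : ℤ))) := by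
  have hsum : ∑ e ∈ N.divisors.filter (fun e => e.Coprime (N / e)),
      1 / (e : ℝ) * ∏ p ∈ (N / e).primeFactors,
        localFactor (m.factorization p) ((N / e).factorization p) p
      = (∑ e ∈ N.divisors.filter (fun e => e.Coprime (N / e)), (μ (N / e) : ℝ) * e)
          / (N : ℝ) ^ 2 := by
    rw [Finset.sum_div]
    refine Finset.sum_congr rfl fun e he => ?_
    obtain ⟨he, hN⟩ := Nat.mem_divisors.mp (Finset.mem_filter.mp he).1
    rw [← one_div_mul_prod_localFactor_zero hN he]
    refine congrArg _ (Finset.prod_congr rfl fun p hp => ?_)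
    rw [factorization_eq_zero_of_coprime_of_dvd h (Nat.prime_of_mem_primeFactors hp)
      ((Nat.dvd_of_mem_primeFactors hp).trans (Nat.div_dvd_of_dvd he))]
  unfold minusCm
  rw [coprimePart_eq_self hm h, Nat.div_self (Nat.pos_of_ne_zero hm), Nat.cast_one]
  unfold localFactor at hsum
  rw [hsum]
  ring

theorem minusCm_coprime_general (m N : ℕ) (hm : 0 < m) (h : Nat.Coprime m N) :
    minusCm m N
        = 24 * ((∑ d ∈ m.divisors, d : ℕ) : ℝ)
            * (∑ e ∈ N.divisors.filter (fun e => Nat.Coprime e (N / e)),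
                ((ArithmeticFunction.moebius (N / e) : ℤ) : ℝ) * (e : ℝ))
            / ((N : ℝ) ^ 2 * ∏ p ∈ N.primeFactors, (1 - (p : ℝ) ^ (-2 : ℤ)))
    ∧ minusCm m N = ((∑ d ∈ m.divisors, d : ℕ) : ℝ) * minusCm 1 N := by
  refine ⟨minusCm_eq_of_coprime hm.ne' h, ?_⟩
  rw [minusCm_eq_of_coprime hm.ne' h, minusCm_eq_of_coprime one_ne_zero (Nat.coprime_one_left N),
    Nat.divisors_one, Finset.sum_singleton, Nat.cast_one]
  ring

theorem minusCm_coprime (m N : ℕ) (hm : 0 < m) (hN : 0 < N) (h : Nat.Coprime m N) :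
    minusCm m N
        = 24 * ((∑ d ∈ m.divisors, d : ℕ) : ℝ)
            * (∑ e ∈ N.divisors.filter (fun e => Nat.Coprime e (N / e)),
                ((ArithmeticFunction.moebius (N / e) : ℤ) : ℝ) * (e : ℝ))
            / ((N : ℝ) ^ 2 * ∏ p ∈ N.primeFactors, (1 - (p : ℝ) ^ (-2 : ℤ)))
    ∧ minusCm m N = ((∑ d ∈ m.divisors, d : ℕ) : ℝ) * minusCm 1 N :=
  minusCm_coprime_general m N hm h
end
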